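/- arXiv:math/0008207 — 3 statements merged into one kernel-verified Lean document; each statement's English description precedes it below -/
import Mathlib

section
/- (Convolution of Picard-Fuchs equations.) Let V be a module over the ring of differentiable functions of \nu equipped with a derivation D extending d/d\nu, and suppose \omega_s, \omega_t, \delta_s, \delta_t \in V satisfy D^2\omega_s = A_sD\omega_s + B_s\omega_s + \delta_s and D^2\omega_t = A_tD\omega_t + B_t\omega_t + \delta_t for functions A_s,B_s,A_t,B_t of \nu. Set \omega := \omega_s \wedge \omega_t in the exterior square (with D acting by the Leibniz rule). If -\frac{1}{2}A_s^2 - \frac{3}{2}A_sA_t + A_s' + B_s + 3B_t = -\frac{1}{2}A_t^2 - \frac{3}{2}A_sA_t + A_t' + B_t + 3B_s =: B, and A := \frac{3}{2}(A_s+A_t), C := -\frac{1}{2}A_sB_s - \frac{3}{2}(A_sB_t+A_tB_s) - \frac{1}{2}A_tB_t + B_s' + B_t', then D^3\omega - A D^2\omega - B D\omega - C\omega = (D\delta_s - (\frac{1}{2}A_s + \frac{3}{2}A_t)\delta_s)\wedge\omega_t + 3\delta_s\wedge D\omega_t + \omega_s\wedge(D\delta_t - (\frac{1}{2}A_t + \frac{3}{2}A_s)\delta_t)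 + 3 D\omega_s\wedge\delta_t. -/
open ExteriorAlgebra

/-- Convolution of two second-order Picard–Fuchs equations. Given `D²ωs = A_s Dωs + B_s ωs + δs`
and `D²ωt = A_t Dωt + B_t ωt + δt` in a module with derivation `D` (over a ring `R` of
functions of `ν` with derivation `d = d/dν`), if the isogeny compatibility condition holds,
then `ω = ωs∧ωt` satisfies the third-order equation
`D³ω - A D²ω - B Dω - C ω = (Dδs - (½A_s + (3/2)A_t)δs)∧ωt + 3δs∧Dωt
  + ωs∧(Dδt - (½A_t + (3/2)A_s)δt) + 3Dωs∧δt`. -/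
theorem convolution_picard_fuchs
    (R : Type*) [CommRing R] [Algebra ℚ R] (d : Derivation ℚ R R)
    (M : Type*) [AddCommGroup M] [Module R M]
    (D : M →+ M) (hD : ∀ (a : R) (m : M), D (a • m) = d a • m + a • D m)
    (DE : ExteriorAlgebra R M →+ ExteriorAlgebra R M)
    (hDE_mul : ∀ x y : ExteriorAlgebra R M, DE (x * y) = DE x * y + x * DE y)
    (hDE_smul : ∀ (a : R) (x : ExteriorAlgebra R M), DE (a • x) = d a • x + a • DE x)
    (hDE_ι : ∀ m : M, DE (ι R m) = ι R (D m))
    (ωs ωt δs δt : M) (As Bs At Bt : R)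
    (hs : D (D ωs) = As • D ωs + Bs • ωs + δs)
    (ht : D (D ωt) = At • D ωt + Bt • ωt + δt)
    (hcompat :
      -(((1 : ℚ)/2) • (As ^ 2)) - ((3 : ℚ)/2) • (As * At) + d As + Bs + 3 * Bt =
      -(((1 : ℚ)/2) • (At ^ 2)) - ((3 : ℚ)/2) • (As * At) + d At + Bt + 3 * Bs) :
    let A : R := ((3 : ℚ)/2) • (As + At)
    let B : R := -(((1 : ℚ)/2) • (As ^ 2)) - ((3 : ℚ)/2) • (As * At) + d As + Bs + 3 * Bt
    let C : R := -(((1 : ℚ)/2) • (As * Bs)) - ((3 : ℚ)/2) • (As * Bt + At * Bs)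
      - ((1 : ℚ)/2) • (At * Bt) + d Bs + d Bt
    let ω : ExteriorAlgebra R M := ι R ωs * ι R ωt
    DE (DE (DE ω)) - A • DE (DE ω) - B • DE ω - C • ω =
      ι R (D δs - ((((1 : ℚ)/2) • As + ((3 : ℚ)/2) • At) • δs)) * ι R ωt
        + 3 • (ι R δs * ι R (D ωt))
        + ι R ωs * ι R (D δt - ((((1 : ℚ)/2) • At + ((3 : ℚ)/2) • As) • δt))
        + 3 • (ι R (D ωs) * ι R δt) := by
  intro A B C ω
  have hDι2 : ∀ m : M, DE (DE (ι R m)) = ι R (D (D m)) := by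
    intro m; rw [hDE_ι, hDE_ι]
  simp only [A, B, C, ω]
  simp only [hDE_mul, hDE_ι, map_add, map_smul, map_sub, hDE_smul, hD, hs, ht,
    smul_add, add_mul, mul_add, smul_mul_assoc, mul_smul_comm, smul_smul, smul_sub,
    sub_mul, mul_sub]
  have ha : (2 : R) * (algebraMap ℚ R) ((1 : ℚ)/2) = 1 := by
    rw [← map_ofNat (algebraMap ℚ R) 2, ← map_mul]
    norm_num
  have hb : (algebraMap ℚ R) ((3 : ℚ)/2) = 3 * (algebraMap ℚ R) ((1 : ℚ)/2) := by
    rw [← map_ofNat (algebraMap ℚ R) 3, ← map_mul]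
    norm_num
  have hq : ∀ (q : ℚ) (r : R), q • r = algebraMap ℚ R q * r := fun q r => Algebra.smul_def q r
  simp only [hq, hb] at hcompat ⊢
  match_scalars <;>
    first
      | ring1
      | linear_combination -As ^ 2 * ha
      | linear_combination -(As * Bs + At * Bt) * ha
      | linear_combination -As * ha
      | linear_combination -At * ha
      | linear_combination (-(3 * As) - 3 * At) * ha
      | linear_combination -hcompat - At ^ 2 * ha
end

section
/- Let \omega(s,\nu) = (s(s-1)(s-\nu^2))^{-1/2} for s in a domain where s(s-1)(s-\nu^2) \ne 0 and \nu \ne 0, \pm 1. Then (1-\nu^2)\partial_\nu^2\omega + ((1-3\nu^2)/\nu)\partial_\nu\omega - \omega = 2\,\partial_s\left(\frac{\sqrt{s(s-1)(s-\nu^2)}}{(s-\nu^2)^2}\right), as an identity of functions of (s,\nu). -/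
set_option maxHeartbeats 2000000

/-- Inhomogeneous Picard–Fuchs identity for `ω(s,ν) = (s(s-1)(s-ν²))^{-1/2}`:
`(1-ν²)∂ν²ω + ((1-3ν²)/ν)∂νω - ω = 2 ∂s( √(s(s-1)(s-ν²)) / (s-ν²)² )`,
formalized in the differential field `ℚ(s,ν,Y)/(Y² - s(s-1)(s-ν²))` with commuting
derivations `∂ν`, `∂s` satisfying `∂ν s = 0`, `∂ν ν = 1`, `∂s s = 1`, `∂s ν = 0`,
so that `ω = Y⁻¹` and the square root is `Y`. -/
theorem inhomogeneous_pf_s (F : Type*) [Field F] [CharZero F]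
    (dν ds : Derivation ℚ F F) (s ν Y : F)
    (hdνs : dν s = 0) (hdνν : dν ν = 1) (hdss : ds s = 1) (hdsν : ds ν = 0)
    (hY2 : Y ^ 2 = s * (s - 1) * (s - ν ^ 2))
    (hY : Y ≠ 0) (hν : ν ≠ 0) (hν1 : ν ^ 2 ≠ 1) (hsν : s - ν ^ 2 ≠ 0) :
    (1 - ν ^ 2) * dν (dν (Y⁻¹)) + ((1 - 3 * ν ^ 2) / ν) * dν (Y⁻¹) - Y⁻¹ =
      2 * ds (Y / (s - ν ^ 2) ^ 2) := by
  have hdνY : dν Y = -(ν * s * (s - 1)) / Y := by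
    have h := congrArg dν hY2
    simp only [Derivation.leibniz_pow, Derivation.leibniz, map_sub, map_one, hdνs, hdνν,
      Derivation.map_one_eq_zero, smul_eq_mul, map_mul] at h
    rw [eq_div_iff hY]
    linear_combination h / 2
  have hdsY : ds Y = ((s - 1) * (s - ν ^ 2) + s * (s - ν ^ 2) + s * (s - 1)) / (2 * Y) := by
    have h := congrArg ds hY2
    simp only [Derivation.leibniz_pow, Derivation.leibniz, map_sub, map_one, hdss, hdsν,
      Derivation.map_one_eq_zero, smul_eq_mul, map_mul] at h
    rw [eq_div_iff (by simpa using hY)]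
    linear_combination h
  have hinv : dν (Y⁻¹) = ν * s * (s - 1) / Y ^ 3 := by
    rw [Derivation.leibniz_inv, hdνY, smul_eq_mul]
    field_simp
  have hinv2 : dν (dν (Y⁻¹)) = s * (s - 1) / Y ^ 3
      + 3 * ν ^ 2 * s ^ 2 * (s - 1) ^ 2 / Y ^ 5 := by
    rw [hinv, Derivation.leibniz_div, Derivation.leibniz_pow]
    simp only [Derivation.leibniz, map_sub, Derivation.map_one_eq_zero, hdνs, hdνν, hdνY,
      smul_eq_mul]
    field_simp
    linear_combination (Y * (3*ν^2*s^2 - 6*ν^2*s^3 + 3*ν^2*s^4)) * mul_inv_cancel₀ hY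
  have hrhs : ds (Y / (s - ν ^ 2) ^ 2) =
      ((s - 1) * (s - ν ^ 2) + s * (s - ν ^ 2) + s * (s - 1)) / (2 * Y * (s - ν ^ 2) ^ 2)
        - 2 * Y / (s - ν ^ 2) ^ 3 := by
    rw [Derivation.leibniz_div, Derivation.leibniz_pow, hdsY]
    simp only [map_sub, Derivation.map_one_eq_zero, hdss, hdsν, Derivation.leibniz_pow,
      smul_eq_mul]
    field_simp
    ring
  have hP : s * (s - 1) * (s - ν ^ 2) ≠ 0 := by rw [← hY2]; exact pow_ne_zero 2 hY
  have hs : s ≠ 0 := fun h => hP (by rw [h]; ring)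
  have hs1 : s - 1 ≠ 0 := fun h => hP (by rw [mul_comm s (s-1), h]; ring)
  have hYinv : Y⁻¹ = Y / (s * (s - 1) * (s - ν ^ 2)) := by
    rw [eq_div_iff hP, ← hY2, sq, ← mul_assoc, inv_mul_cancel₀ hY, one_mul]
  have c1 : ν * s * (s - 1) / Y ^ 3
      = ν * s * (s - 1) * Y / (s * (s - 1) * (s - ν ^ 2)) ^ 2 := by
    rw [div_eq_div_iff (pow_ne_zero 3 hY) (pow_ne_zero 2 hP)]
    linear_combination (-(ν * s * (s - 1)) * ((s * (s - 1) * (s - ν ^ 2)) + Y ^ 2)) * hY2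
  have c2 : s * (s - 1) / Y ^ 3
      = s * (s - 1) * Y / (s * (s - 1) * (s - ν ^ 2)) ^ 2 := by
    rw [div_eq_div_iff (pow_ne_zero 3 hY) (pow_ne_zero 2 hP)]
    linear_combination (-(s * (s - 1)) * ((s * (s - 1) * (s - ν ^ 2)) + Y ^ 2)) * hY2
  have c3 : 3 * ν ^ 2 * s ^ 2 * (s - 1) ^ 2 / Y ^ 5
      = 3 * ν ^ 2 * s ^ 2 * (s - 1) ^ 2 * Y / (s * (s - 1) * (s - ν ^ 2)) ^ 3 := by
    rw [div_eq_div_iff (pow_ne_zero 5 hY) (pow_ne_zero 3 hP)]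
    linear_combination (-(3 * ν ^ 2 * s ^ 2 * (s - 1) ^ 2) *
      ((s * (s - 1) * (s - ν ^ 2)) ^ 2 + (s * (s - 1) * (s - ν ^ 2)) * Y ^ 2 + Y ^ 4)) * hY2
  have c4 : ((s - 1) * (s - ν ^ 2) + s * (s - ν ^ 2) + s * (s - 1)) / (2 * Y * (s - ν ^ 2) ^ 2)
      = ((s - 1) * (s - ν ^ 2) + s * (s - ν ^ 2) + s * (s - 1)) * Y /
        (2 * (s * (s - 1) * (s - ν ^ 2)) * (s - ν ^ 2) ^ 2) := by
    rw [div_eq_div_iff (by simp [hY, hsν]) (by simp [hP, hsν])]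
    linear_combination (-(2 * (s - ν ^ 2) ^ 2 *
      ((s - 1) * (s - ν ^ 2) + s * (s - ν ^ 2) + s * (s - 1)))) * hY2
  rw [hinv2, hinv, hrhs, hYinv, c1, c2, c3, c4]
  field_simp
  ring
end

section
/- Let \mu = (\nu+1)/(\nu-1) and \omega(t,\nu) = (t(t-1)(t-\mu^2))^{-1/2}. Then \partial_\nu^2\omega + \frac{\nu^2-2\nu-1}{\nu(\nu^2-1)}\partial_\nu\omega + \frac{1}{\nu(\nu-1)^2}\omega = -\frac{2}{\nu(\nu-1)^2}\,\partial_t\left(\frac{\sqrt{t(t-1)(t-\mu^2)}}{(t-\mu^2)^2}\right). -/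
set_option maxHeartbeats 4000000 in
/-- Inhomogeneous Picard–Fuchs identity for `ω(t,ν) = (t(t-1)(t-μ²))^{-1/2}` with
`μ = (ν+1)/(ν-1)`:
`∂ν²ω + ((ν²-2ν-1)/(ν(ν²-1)))∂νω + (1/(ν(ν-1)²))ω = -(2/(ν(ν-1)²)) ∂t( √(t(t-1)(t-μ²)) / (t-μ²)² )`,
formalized in the differential field `ℚ(t,ν,U)/(U² - t(t-1)(t-μ²))` with commuting
derivations `∂ν`, `∂t` satisfying `∂ν t = 0`, `∂ν ν = 1`, `∂t t = 1`, `∂t ν = 0`,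
so that `ω = U⁻¹` and the square root is `U`. -/
theorem inhomogeneous_pf_t (F : Type*) [Field F] [CharZero F]
    (dν dt : Derivation ℚ F F) (t ν U : F)
    (hdνt : dν t = 0) (hdνν : dν ν = 1) (hdtt : dt t = 1) (hdtν : dt ν = 0)
    (hν : ν ≠ 0) (hν1 : ν ≠ 1) (hνm1 : ν ≠ -1)
    (hU2 : U ^ 2 = t * (t - 1) * (t - ((ν + 1) / (ν - 1)) ^ 2))
    (hU : U ≠ 0) (htμ : t - ((ν + 1) / (ν - 1)) ^ 2 ≠ 0) :
    dν (dν (U⁻¹)) + ((ν ^ 2 - 2 * ν - 1) / (ν * (ν ^ 2 - 1))) * dν (U⁻¹)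
        + (1 / (ν * (ν - 1) ^ 2)) * U⁻¹ =
      -(2 / (ν * (ν - 1) ^ 2)) * dt (U / (t - ((ν + 1) / (ν - 1)) ^ 2) ^ 2) := by
  have hs : ν - 1 ≠ 0 := sub_ne_zero.mpr hν1
  have hp : ν + 1 ≠ 0 := by intro h; exact hνm1 (by linear_combination h)
  have ht : t ≠ 0 := by
    intro h; apply hU; have : U ^ 2 = 0 := by rw [hU2, h]; ring
    exact pow_eq_zero_iff (by norm_num) |>.mp this
  have ht1 : t - 1 ≠ 0 := by
    intro h
    apply hU
    have h' : U ^ 2 = 0 := by rw [hU2]; rw [show t = (1:F) by linear_combination h]; ring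
    exact pow_eq_zero_iff (by norm_num) |>.mp h'
  have hT : t * (ν - 1) ^ 2 - (ν + 1) ^ 2 ≠ 0 := by
    intro h; apply htμ; field_simp [hs]; linear_combination h
  have hPbig : t * (t - 1) * (t * (ν - 1) ^ 2 - (ν + 1) ^ 2) ≠ 0 :=
    mul_ne_zero (mul_ne_zero ht ht1) hT
  have hdν2 : dν (2 : F) = 0 := by
    rw [show (2:F) = ((2:ℕ):F) by norm_num]; exact Derivation.map_natCast dν 2
  have hdt2 : dt (2 : F) = 0 := by
    rw [show (2:F) = ((2:ℕ):F) by norm_num]; exact Derivation.map_natCast dt 2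
  have hinv2 : U⁻¹ ^ 2 = (t * (t - 1) * (t - ((ν + 1) / (ν - 1)) ^ 2))⁻¹ := by
    rw [inv_pow, hU2]
  have hinv2' : U⁻¹ ^ 2 = (ν - 1) ^ 2 / (t * (t - 1) * (t * (ν - 1) ^ 2 - (ν + 1) ^ 2)) := by
    rw [hinv2]; field_simp [hs]; try ring
  -- ∂ν U
  have hQ : dν (t * (t - 1) * (t - ((ν + 1) / (ν - 1)) ^ 2))
      = 4 * t * (t - 1) * (ν + 1) / (ν - 1) ^ 3 := by
    simp only [Derivation.leibniz, Derivation.leibniz_pow, Derivation.leibniz_div,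
      map_sub, map_add, Derivation.map_one_eq_zero, hdνt, hdνν,
      nsmul_eq_mul, Nat.cast_ofNat, smul_eq_mul]
    simp only [Nat.reduceSub, pow_one]
    field_simp [hs]
    ring
  have hA : dν U = 2 * t * (t - 1) * (ν + 1) / (ν - 1) ^ 3 * U⁻¹ := by
    have h1 : dν (U ^ 2) = 4 * t * (t - 1) * (ν + 1) / (ν - 1) ^ 3 := by rw [hU2, hQ]
    rw [Derivation.leibniz_pow] at h1
    simp only [smul_eq_mul, pow_one, nsmul_eq_mul, Nat.cast_ofNat] at h1
    field_simp [hs, hU] at h1 ⊢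
    linear_combination h1 / 2
  -- ∂t U
  have hQt : dt (t * (t - 1) * (t - ((ν + 1) / (ν - 1)) ^ 2))
      = (t - 1) * (t - ((ν + 1) / (ν - 1)) ^ 2) + t * (t - ((ν + 1) / (ν - 1)) ^ 2)
        + t * (t - 1) := by
    simp only [Derivation.leibniz, Derivation.leibniz_pow, Derivation.leibniz_div,
      map_sub, map_add, Derivation.map_one_eq_zero, hdtt, hdtν,
      nsmul_eq_mul, Nat.cast_ofNat, smul_eq_mul]
    field_simp [hs]
    ring
  have hB : dt U = ((t - 1) * (t * (ν - 1) ^ 2 - (ν + 1) ^ 2)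
      + t * (t * (ν - 1) ^ 2 - (ν + 1) ^ 2) + t * (t - 1) * (ν - 1) ^ 2)
        / (2 * (ν - 1) ^ 2) * U⁻¹ := by
    have h1 : dt (U ^ 2) = (t - 1) * (t - ((ν + 1) / (ν - 1)) ^ 2)
        + t * (t - ((ν + 1) / (ν - 1)) ^ 2) + t * (t - 1) := by rw [hU2, hQt]
    rw [Derivation.leibniz_pow] at h1
    simp only [smul_eq_mul, pow_one, nsmul_eq_mul, Nat.cast_ofNat] at h1
    field_simp [hs, hU] at h1 ⊢
    linear_combination h1
  -- ∂ν ∂ν U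
  have hC : dν (dν U) = (-4 * t * (t - 1) * (ν + 2) / (ν - 1) ^ 4
      - 4 * t * (t - 1) * (ν + 1) ^ 2
        / ((ν - 1) ^ 4 * (t * (ν - 1) ^ 2 - (ν + 1) ^ 2))) * U⁻¹ := by
    have h2 : dν (dν U) = dν (2 * t * (t - 1) * (ν + 1) / (ν - 1) ^ 3 * U⁻¹) := by
      rw [← hA]
    rw [h2]
    simp only [Derivation.leibniz, Derivation.leibniz_pow, Derivation.leibniz_div,
      Derivation.leibniz_inv, map_sub, map_add, Derivation.map_one_eq_zero, hdν2, hdνt, hdνν,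
      nsmul_eq_mul, Nat.cast_ofNat, smul_eq_mul, hA]
    rw [hinv2']
    generalize U⁻¹ = w
    field_simp [hs, hp, ht, ht1, hT, hPbig]
    ring
  -- rewrite the dt argument to be homogeneous in U⁻¹
  have hUP : U = t * (t - 1) * (t - ((ν + 1) / (ν - 1)) ^ 2) * U⁻¹ := by
    rw [← hU2]; field_simp [hU]; try ring
  have harg : U / (t - ((ν + 1) / (ν - 1)) ^ 2) ^ 2
      = t * (t - 1) * (ν - 1) ^ 2 * U⁻¹ / (t * (ν - 1) ^ 2 - (ν + 1) ^ 2) := by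
    conv_lhs => rw [hUP]
    rw [div_eq_div_iff (pow_ne_zero 2 htμ) hT]
    field_simp [hs]
  have hg1 : dν U⁻¹ = -(2 * (ν + 1) / ((ν - 1) * (t * (ν - 1) ^ 2 - (ν + 1) ^ 2))) * U⁻¹ := by
    rw [Derivation.leibniz_inv]
    simp only [smul_eq_mul, hA]
    rw [hinv2']
    generalize U⁻¹ = w
    field_simp [hs, hp, ht, ht1, hT, hPbig]
  have hg2 : dν (dν U⁻¹) =
      ((-2 * ((ν - 1) * (t * (ν - 1) ^ 2 - (ν + 1) ^ 2)
          - (ν + 1) * (t * (ν - 1) ^ 2 - (ν + 1) ^ 2)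
          - (ν + 1) * (ν - 1) * (2 * t * (ν - 1) - 2 * (ν + 1)))
        + 4 * (ν + 1) ^ 2)
        / ((ν - 1) * (t * (ν - 1) ^ 2 - (ν + 1) ^ 2)) ^ 2) * U⁻¹ := by
    conv_lhs => rw [hg1]
    simp only [Derivation.leibniz, Derivation.leibniz_pow, Derivation.leibniz_div,
      map_sub, map_add, map_neg, Derivation.map_one_eq_zero, hdν2, hdνt, hdνν,
      nsmul_eq_mul, Nat.cast_ofNat, smul_eq_mul, smul_neg, neg_smul, neg_neg, hg1]
    generalize U⁻¹ = w
    field_simp [hs, hp, ht, ht1, hT, hPbig]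
    ring
  have hgt1 : dt U⁻¹ = -(((t - 1) * (t * (ν - 1) ^ 2 - (ν + 1) ^ 2)
      + t * (t * (ν - 1) ^ 2 - (ν + 1) ^ 2) + t * (t - 1) * (ν - 1) ^ 2)
        / (2 * (t * (t - 1) * (t * (ν - 1) ^ 2 - (ν + 1) ^ 2)))) * U⁻¹ := by
    rw [Derivation.leibniz_inv]
    simp only [smul_eq_mul, hB]
    rw [hinv2']
    generalize U⁻¹ = w
    field_simp [hs, hp, ht, ht1, hT, hPbig]
  have hg3 : dt (t * (t - 1) * (ν - 1) ^ 2 * U⁻¹ / (t * (ν - 1) ^ 2 - (ν + 1) ^ 2))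
      = (((2 * t - 1) * (t * (ν - 1) ^ 2 - (ν + 1) ^ 2) * (ν - 1) ^ 2
          - 3 * t * (t - 1) * (ν - 1) ^ 4)
        / (2 * (t * (ν - 1) ^ 2 - (ν + 1) ^ 2) ^ 2)) * U⁻¹ := by
    simp only [Derivation.leibniz, Derivation.leibniz_pow, Derivation.leibniz_div,
      map_sub, map_add, map_neg, Derivation.map_one_eq_zero, hdt2, hdtt, hdtν,
      nsmul_eq_mul, Nat.cast_ofNat, smul_eq_mul, smul_neg, neg_smul, neg_neg, hgt1]
    generalize U⁻¹ = w
    field_simp [hs, hp, ht, ht1, hT, hPbig]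
    ring
  rw [harg, hg2, hg1, hg3]
  generalize U⁻¹ = w
  have hsT : (ν - 1) * (t * (ν - 1) ^ 2 - (ν + 1) ^ 2) ≠ 0 := mul_ne_zero hs hT
  have hν2 : ν ^ 2 - 1 ≠ 0 := by
    intro h; apply hp
    rcases mul_eq_zero.mp (show (ν - 1) * (ν + 1) = 0 by linear_combination h) with h' | h'
    · exact absurd h' hs
    · exact h'
  have hνν2 : ν * (ν ^ 2 - 1) ≠ 0 := mul_ne_zero hν hν2
  have hνs2 : ν * (ν - 1) ^ 2 ≠ 0 := mul_ne_zero hν (pow_ne_zero 2 hs)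
  field_simp [hs, hp, ht, ht1, hT, hν, hsT, hν2, hνν2, hνs2]
  field_simp [show (ν - 1) ^ 2 * t - (ν + 1) ^ 2 ≠ 0 by rw [mul_comm]; exact hT]
  ring
end
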